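/- Let u_max > 0 > u_min and v_min > 0 be reals, and let p_s, v_s, p_e, v_e be reals with v_s ≥ v_min and v_e ≥ v_min. Define q_1 = p_s + (v_min^2 − v_s^2)/(2·u_min) and q_2 = p_e + (v_min^2 − v_e^2)/(2·u_max), and suppose q_2 ≥ q_1. Let D = (v_min − v_s)/u_min + (q_2 − q_1)/v_min + (v_e − v_min)/u_max. Then for all reals t_s < t_e and all functions p, v : ℝ → ℝ such that p is differentiable on [t_s, t_e] with p'(t) = v(t) there, v is differentiable on [t_s, t_e] with u_min ≤ v'(t) ≤ u_max for all t there, v(t) ≥ v_min for all t in [t_s, t_e], p(t_s) = p_s, v(t_s) = v_s, p(t_e) = p_e and v(t_e) = v_e, one has t_e − t_s ≤ D. -/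

import Mathlib

/-!
Set `t₁ = (v_min - v_s)/u_min` and `t₃ = (v_e - v_min)/u_max`, the durations of the braking and
accelerating phases of the extremal trajectory. Since `u_min ≤ v'`, the speed stays above the
braking ramp `v_s + u_min (t - t_s)` during `[t_s, t_s + t₁]`; since `v' ≤ u_max`, it stays above
the accelerating ramp `v_min + u_max (t - (t_e - t₃))` during `[t_e - t₃, t_e]`; in between it is
at least `v_min`. Integrating these lower bounds, the distance `p_e - p_s` is at least
`q₁ - p_s + v_min (t_e - t_s - t₁ - t₃) + p_e - q₂`, which rearranges to `t_e - t_s ≤ D`.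
If instead `t_e - t_s < t₁ + t₃`, the claim holds because `q₁ ≤ q₂` gives `t₁ + t₃ ≤ D`.
-/

open Set

theorem sub_le_sub_of_hasDerivAt_le {f g f' g' : ℝ → ℝ} {a b : ℝ} (hab : a ≤ b)
    (hf : ∀ t ∈ Icc a b, HasDerivAt f (f' t) t) (hg : ∀ t ∈ Icc a b, HasDerivAt g (g' t) t)
    (hfg : ∀ t ∈ Icc a b, f' t ≤ g' t) : f b - f a ≤ g b - g a := by
  have hmono : MonotoneOn (fun t ↦ g t - f t) (Icc a b) := by
    refine monotoneOn_of_hasDerivWithinAt_nonneg (f' := fun t ↦ g' t - f' t) (convex_Icc a b)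
      (fun t ht ↦ ((hg t ht).sub (hf t ht)).continuousAt.continuousWithinAt)
      (fun t ht ↦ ?_) (fun t ht ↦ ?_)
    · rw [interior_Icc] at ht
      exact ((hg t (Ioo_subset_Icc_self ht)).sub (hf t (Ioo_subset_Icc_self ht))).hasDerivWithinAt
    · rw [interior_Icc] at ht
      exact sub_nonneg.mpr (hfg t (Ioo_subset_Icc_self ht))
  have := hmono (left_mem_Icc.mpr hab) (right_mem_Icc.mpr hab) hab
  simp only at this
  linarith

theorem mul_sub_le_image_sub_of_le_hasDerivAt {f f' : ℝ → ℝ} {u c d : ℝ} (hcd : c ≤ d)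
    (hf : ∀ t ∈ Icc c d, HasDerivAt f (f' t) t) (hu : ∀ t ∈ Icc c d, u ≤ f' t) :
    u * (d - c) ≤ f d - f c := by
  have := sub_le_sub_of_hasDerivAt_le hcd (fun t _ ↦ hasDerivAt_mul_const (x := t) u) hf hu
  linarith

theorem image_sub_le_mul_sub_of_hasDerivAt_le {f f' : ℝ → ℝ} {u c d : ℝ} (hcd : c ≤ d)
    (hf : ∀ t ∈ Icc c d, HasDerivAt f (f' t) t) (hu : ∀ t ∈ Icc c d, f' t ≤ u) :
    f d - f c ≤ u * (d - c) := by
  have := sub_le_sub_of_hasDerivAt_le hcd hf (fun t _ ↦ hasDerivAt_mul_const (x := t) u) hu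
  linarith

theorem mul_add_sq_le_sub_of_add_mul_sub_le {p v : ℝ → ℝ} {w u c d : ℝ} (hcd : c ≤ d)
    (hp : ∀ t ∈ Icc c d, HasDerivAt p (v t) t) (hv : ∀ t ∈ Icc c d, w + u * (t - c) ≤ v t) :
    w * (d - c) + u * (d - c) ^ 2 / 2 ≤ p d - p c := by
  have hramp (t : ℝ) : HasDerivAt (fun t ↦ w * (t - c) + u * (t - c) ^ 2 / 2) (w + u * (t - c)) t := by
    have hshift : HasDerivAt (fun t ↦ t - c) 1 t := (hasDerivAt_id' t).sub_const c
    refine ((hshift.const_mul w).fun_add ((hshift.fun_pow 2).const_mul u |>.div_const 2)).congr_deriv ?_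
    ring
  simpa using sub_le_sub_of_hasDerivAt_le hcd (fun t _ ↦ hramp t) hp hv

section PhaseDistance

variable {p v : ℝ → ℝ} {u c d : ℝ}

theorem mul_add_sq_le_image_sub_of_le_deriv (hcd : c ≤ d)
    (hp : ∀ t ∈ Icc c d, HasDerivAt p (v t) t) (hv : ∀ t ∈ Icc c d, DifferentiableAt ℝ v t)
    (hu : ∀ t ∈ Icc c d, u ≤ deriv v t) :
    v c * (d - c) + u * (d - c) ^ 2 / 2 ≤ p d - p c := by
  refine mul_add_sq_le_sub_of_add_mul_sub_le hcd hp fun t ht ↦ ?_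
  have := mul_sub_le_image_sub_of_le_hasDerivAt ht.1
    (fun s hs ↦ (hv s ⟨hs.1, hs.2.trans ht.2⟩).hasDerivAt) (fun s hs ↦ hu s ⟨hs.1, hs.2.trans ht.2⟩)
  linarith

theorem mul_sub_sq_le_image_sub_of_deriv_le (hcd : c ≤ d)
    (hp : ∀ t ∈ Icc c d, HasDerivAt p (v t) t) (hv : ∀ t ∈ Icc c d, DifferentiableAt ℝ v t)
    (hu : ∀ t ∈ Icc c d, deriv v t ≤ u) :
    v d * (d - c) - u * (d - c) ^ 2 / 2 ≤ p d - p c := by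
  have := mul_add_sq_le_sub_of_add_mul_sub_le (w := v d - u * (d - c)) (u := u) hcd hp
    fun t ht ↦ by
      have := image_sub_le_mul_sub_of_hasDerivAt_le ht.2
        (fun s hs ↦ (hv s ⟨ht.1.trans hs.1, hs.2⟩).hasDerivAt) (fun s hs ↦ hu s ⟨ht.1.trans hs.1, hs.2⟩)
      linarith
  linarith

end PhaseDistance

/-- Deadline problem (Problem 3, Proposition 4): D is an upper bound on the travel
time of every admissible trajectory (with speed bounded below by v_min) through
the zone with the given boundary states. -/
theorem stmt_12
    (u_max u_min v_min : ℝ) (hmax : 0 < u_max) (hmin : u_min < 0) (hvmin : 0 < v_min)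
    (p_s v_s p_e v_e : ℝ) (hvs : v_min ≤ v_s) (hve : v_min ≤ v_e)
    (q₁ q₂ D : ℝ)
    (hq1 : q₁ = p_s + (v_min ^ 2 - v_s ^ 2) / (2 * u_min))
    (hq2 : q₂ = p_e + (v_min ^ 2 - v_e ^ 2) / (2 * u_max))
    (hq : q₁ ≤ q₂)
    (hD : D = (v_min - v_s) / u_min + (q₂ - q₁) / v_min + (v_e - v_min) / u_max) :
    ∀ (t_s t_e : ℝ), t_s < t_e →
      ∀ (p v : ℝ → ℝ),
        (∀ t ∈ Set.Icc t_s t_e, HasDerivAt p (v t) t) →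
        (∀ t ∈ Set.Icc t_s t_e, DifferentiableAt ℝ v t) →
        (∀ t ∈ Set.Icc t_s t_e, u_min ≤ deriv v t ∧ deriv v t ≤ u_max) →
        (∀ t ∈ Set.Icc t_s t_e, v_min ≤ v t) →
        p t_s = p_s → v t_s = v_s → p t_e = p_e → v t_e = v_e →
        t_e - t_s ≤ D  := by
  intro t_s t_e _ p v hp hv hacc hvlb hps hvs' hpe hve'
  set t₁ := (v_min - v_s) / u_min with ht₁_def
  set t₃ := (v_e - v_min) / u_max with ht₃_def
  have ht₁ : 0 ≤ t₁ := div_nonneg_of_nonpos (by linarith) hmin.le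
  have ht₃ : 0 ≤ t₃ := div_nonneg (by linarith) hmax.le
  have hq' : 0 ≤ (q₂ - q₁) / v_min := div_nonneg (by linarith) hvmin.le
  rcases lt_or_ge (t_e - t₃) (t_s + t₁) with hshort | hab
  · linarith
  have hsub {c d : ℝ} (hc : t_s ≤ c) (hd : d ≤ t_e) : Icc c d ⊆ Icc t_s t_e := Icc_subset_Icc hc hd
  have hbrake := mul_add_sq_le_image_sub_of_le_deriv (by linarith : t_s ≤ t_s + t₁)
    (fun t ht ↦ hp t (hsub le_rfl (by linarith) ht)) (fun t ht ↦ hv t (hsub le_rfl (by linarith) ht))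
    (fun t ht ↦ (hacc t (hsub le_rfl (by linarith) ht)).1)
  have hcruise := mul_sub_le_image_sub_of_le_hasDerivAt hab
    (fun t ht ↦ hp t (hsub (by linarith) (by linarith) ht))
    (fun t ht ↦ hvlb t (hsub (by linarith) (by linarith) ht))
  have haccel := mul_sub_sq_le_image_sub_of_deriv_le (by linarith : t_e - t₃ ≤ t_e)
    (fun t ht ↦ hp t (hsub (by linarith) le_rfl ht)) (fun t ht ↦ hv t (hsub (by linarith) le_rfl ht))
    (fun t ht ↦ (hacc t (hsub (by linarith) le_rfl ht)).2)
  have hbrake_dist : v_s * t₁ + u_min * t₁ ^ 2 / 2 = (v_min ^ 2 - v_s ^ 2) / (2 * u_min) := by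
    rw [ht₁_def]
    field_simp
    ring
  have haccel_dist : v_e * t₃ - u_max * t₃ ^ 2 / 2 = -((v_min ^ 2 - v_e ^ 2) / (2 * u_max)) := by
    rw [ht₃_def]
    field_simp
    ring
  rw [add_sub_cancel_left, hvs', hps] at hbrake
  rw [sub_sub_cancel, hve', hpe] at haccel
  have hcruise_time : t_e - t₃ - (t_s + t₁) ≤ (q₂ - q₁) / v_min := by
    rw [le_div_iff₀ hvmin, hq1, hq2]
    linarith
  rw [hD]
  linarith
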